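/- Let I be an interval of length h_e, and let N, C be disjoint measurable subsets of I with |N| + |C| = h_e and |N|, |C| > 0. Let μ : I → ℝ be measurable, vanishing a.e. on N, with finite Gagliardo seminorm |μ|_{δ,I} for some 0 < δ ≤ 1/2. Then ‖μ‖_{L¹(I)} ≤ (|C|^{1/2}/|N|^{1/2}) · h_e^{1/2+δ} · |μ|_{δ,I}. -/

import Mathlib

open MeasureTheory Set

/-!
Since `μ` vanishes on `N`, for `ξ ∈ I` and `η ∈ N` we have `μ(ξ)² = (μ(ξ) - μ(η))²`, and this
is at most `h_e^{1+2δ}` times the Gagliardo integrand because `|ξ - η| ≤ h_e`. Averaging over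
`η ∈ N` and integrating in `ξ` gives `|N| ‖μ‖²_{L²(I)} ≤ h_e^{1+2δ} |μ|²_{δ,I}`. As `N ∪ C` fills
`I` up to a null set, `μ` is carried by `C`, and Cauchy–Schwarz on `C` turns the `L²` bound into
the `L¹` bound.
-/

/-- With `s = 1 + 2δ`, the integrand of the squared seminorm `|u|²_{δ,I}`. -/
noncomputable def gagliardoKernel (u : ℝ → ℝ) (s ξ η : ℝ) : ℝ :=
  (u ξ - u η) ^ 2 / |ξ - η| ^ s

lemma gagliardoKernel_nonneg (u : ℝ → ℝ) (s ξ η : ℝ) : 0 ≤ gagliardoKernel u s ξ η :=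
  div_nonneg (sq_nonneg _) (Real.rpow_nonneg (abs_nonneg _) _)

lemma sq_sub_le_rpow_mul_gagliardoKernel (u : ℝ → ℝ) {s L ξ η : ℝ} (hs : 0 ≤ s)
    (h : |ξ - η| ≤ L) : (u ξ - u η) ^ 2 ≤ L ^ s * gagliardoKernel u s ξ η := by
  rcases eq_or_ne ξ η with rfl | hne
  · simp [gagliardoKernel]
  have hpos : 0 < |ξ - η| ^ s := Real.rpow_pos_of_pos (abs_pos.2 (sub_ne_zero.2 hne)) s
  rw [gagliardoKernel, mul_div_assoc', le_div_iff₀ hpos, mul_comm]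
  exact mul_le_mul_of_nonneg_right (Real.rpow_le_rpow (abs_nonneg _) h hs) (sq_nonneg _)

lemma MeasureTheory.IntegrableOn.integrable_restrict_prod_restrict {α β E : Type*}
    [MeasurableSpace α] [MeasurableSpace β] [NormedAddCommGroup E] {μ : Measure α}
    {ν : Measure β} [SFinite μ] [SFinite ν] {f : α × β → E} {s : Set α} {t : Set β}
    (h : IntegrableOn f (s ×ˢ t) (μ.prod ν)) :
    Integrable f ((μ.restrict s).prod (ν.restrict t)) := by
  rwa [Measure.prod_restrict]

section VanishingOnSubset

variable {u : ℝ → ℝ} {s L : ℝ} {I N : Set ℝ}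

lemma measureReal_mul_sq_le_integral_gagliardoKernel (hs : 0 ≤ s)
    (hI : ∀ ξ ∈ I, ∀ η ∈ I, |ξ - η| ≤ L) (hNm : MeasurableSet N) (hNI : N ⊆ I)
    (huN : ∀ᵐ x ∂volume.restrict N, u x = 0) {ξ : ℝ} (hξ : ξ ∈ I)
    (hint : IntegrableOn (gagliardoKernel u s ξ) I) :
    volume.real N * u ξ ^ 2 ≤ L ^ s * ∫ η in I, gagliardoKernel u s ξ η := by
  have hL : 0 ≤ L := (abs_nonneg _).trans (hI ξ hξ ξ hξ)
  calc volume.real N * u ξ ^ 2 = ∫ η in N, (u ξ - u η) ^ 2 := by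
        rw [← smul_eq_mul, ← setIntegral_const]
        refine integral_congr_ae ?_
        filter_upwards [huN] with η hη
        rw [hη, sub_zero]
    _ ≤ ∫ η in N, L ^ s * gagliardoKernel u s ξ η := by
        refine integral_mono_of_nonneg (ae_of_all _ fun _ => sq_nonneg _)
          ((hint.mono_set hNI).const_mul _) ?_
        filter_upwards [ae_restrict_mem hNm] with η hη
        exact sq_sub_le_rpow_mul_gagliardoKernel u hs (hI ξ hξ η (hNI hη))
    _ ≤ ∫ η in I, L ^ s * gagliardoKernel u s ξ η :=
        setIntegral_mono_set (hint.const_mul _)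
          (ae_of_all _ fun η =>
            mul_nonneg (Real.rpow_nonneg hL _) (gagliardoKernel_nonneg u s ξ η))
          hNI.eventuallyLE
    _ = L ^ s * ∫ η in I, gagliardoKernel u s ξ η := integral_const_mul _ _

variable (hs : 0 ≤ s) (hI : ∀ ξ ∈ I, ∀ η ∈ I, |ξ - η| ≤ L) (hIm : MeasurableSet I)
  (hNm : MeasurableSet N) (hNI : N ⊆ I) (huN : ∀ᵐ x ∂volume.restrict N, u x = 0)
  (hK : IntegrableOn (fun p : ℝ × ℝ => gagliardoKernel u s p.1 p.2) (I ×ˢ I))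
include hs hI hIm hNm hNI huN hK

lemma ae_measureReal_mul_sq_le_integral_gagliardoKernel :
    ∀ᵐ ξ ∂volume.restrict I,
      volume.real N * u ξ ^ 2 ≤ L ^ s * ∫ η in I, gagliardoKernel u s ξ η := by
  filter_upwards [hK.integrable_restrict_prod_restrict.prod_right_ae, ae_restrict_mem hIm]
    with ξ hint hξ
  exact measureReal_mul_sq_le_integral_gagliardoKernel hs hI hNm hNI huN hξ hint

lemma measureReal_mul_integral_sq_le :
    volume.real N * ∫ ξ in I, u ξ ^ 2 ≤
      L ^ s * ∫ ξ in I, ∫ η in I, gagliardoKernel u s ξ η := by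
  rw [← integral_const_mul, ← integral_const_mul]
  exact integral_mono_of_nonneg
    (ae_of_all _ fun _ => mul_nonneg measureReal_nonneg (sq_nonneg _))
    (hK.integrable_restrict_prod_restrict.integral_prod_left.const_mul _)
    (ae_measureReal_mul_sq_le_integral_gagliardoKernel hs hI hIm hNm hNI huN hK)

lemma integrableOn_sq_of_gagliardoKernel (hum : AEStronglyMeasurable u (volume.restrict I))
    (hN : 0 < volume.real N) : IntegrableOn (fun ξ => u ξ ^ 2) I := by
  refine (hK.integrable_restrict_prod_restrict.integral_prod_left.const_mul
    (L ^ s / volume.real N)).mono' (hum.pow 2) ?_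
  filter_upwards [ae_measureReal_mul_sq_le_integral_gagliardoKernel hs hI hIm hNm hNI huN hK]
    with ξ hξ
  rw [Real.norm_of_nonneg (sq_nonneg _), div_mul_eq_mul_div, le_div_iff₀ hN, mul_comm]
  exact hξ

end VanishingOnSubset

section

variable {α E : Type*} [MeasurableSpace α] {ν : Measure α}

lemma union_ae_eq_of_measureReal_add_eq {N C I : Set α} (hNm : MeasurableSet N)
    (hCm : MeasurableSet C) (hNI : N ⊆ I) (hCI : C ⊆ I) (hdisj : Disjoint N C)
    (hI : ν I ≠ ⊤) (h : ν.real N + ν.real C = ν.real I) :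
    (N ∪ C : Set α) =ᵐ[ν] I := by
  have hN : ν N ≠ ⊤ := measure_ne_top_of_subset hNI hI
  have hC : ν C ≠ ⊤ := measure_ne_top_of_subset hCI hI
  refine ae_eq_of_subset_of_measure_ge (union_subset hNI hCI) (le_of_eq ?_)
    (hNm.union hCm).nullMeasurableSet hI
  rw [measure_union hdisj hCm,
    ← ENNReal.toReal_eq_toReal_iff' hI (ENNReal.add_ne_top.2 ⟨hN, hC⟩), ENNReal.toReal_add hN hC]
  exact h.symm

lemma setIntegral_eq_of_union_ae_eq [NormedAddCommGroup E] [NormedSpace ℝ E] {f : α → E}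
    {N C I : Set α} (hunion : (N ∪ C : Set α) =ᵐ[ν] I) (hdisj : Disjoint N C)
    (hCm : MeasurableSet C) (hf : IntegrableOn f (N ∪ C) ν) (hfN : ∀ᵐ x ∂ν.restrict N, f x = 0) :
    ∫ x in I, f x ∂ν = ∫ x in C, f x ∂ν := by
  rw [← setIntegral_congr_set hunion, setIntegral_union hdisj hCm hf.left_of_union
    hf.right_of_union, integral_eq_zero_of_ae hfN, zero_add]

lemma integral_abs_le_sqrt_measureReal_mul_sqrt_integral_sq [IsFiniteMeasure ν] {f : α → ℝ}
    (hf : AEStronglyMeasurable f ν) (hf2 : Integrable (fun x => f x ^ 2) ν) :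
    ∫ x, |f x| ∂ν ≤ √(ν.real univ) * √(∫ x, f x ^ 2 ∂ν) := by
  have hmem : MemLp (fun x => |f x|) (ENNReal.ofReal 2) ν := by
    rw [ENNReal.ofReal_ofNat,
      memLp_two_iff_integrable_sq (continuous_abs.comp_aestronglyMeasurable hf)]
    simpa only [sq_abs] using hf2
  have h := integral_mul_le_Lp_mul_Lq_of_nonneg Real.HolderConjugate.two_two
    (ae_of_all _ fun _ => zero_le_one) (ae_of_all _ fun x => abs_nonneg (f x)) (memLp_const 1)
    hmem
  simpa only [one_mul, one_pow, mul_one, Real.one_rpow, integral_const, smul_eq_mul,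
    Real.rpow_two, sq_abs, ← Real.sqrt_eq_rpow] using h

lemma setIntegral_abs_le_sqrt_measureReal_mul_sqrt {f : α → ℝ} {C I : Set α} (hCI : C ⊆ I)
    (hC : ν C ≠ ⊤) (hf : AEStronglyMeasurable f ν) (hf2 : IntegrableOn (fun x => f x ^ 2) I ν)
    {B : ℝ} (hB : ∫ x in I, f x ^ 2 ∂ν ≤ B) :
    ∫ x in C, |f x| ∂ν ≤ √(ν.real C) * √B := by
  have : IsFiniteMeasure (ν.restrict C) := isFiniteMeasure_restrict.2 hC
  calc ∫ x in C, |f x| ∂ν ≤ √(ν.real C) * √(∫ x in C, f x ^ 2 ∂ν) := by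
        simpa only [measureReal_restrict_apply_univ] using
          integral_abs_le_sqrt_measureReal_mul_sqrt_integral_sq hf.restrict (hf2.mono_set hCI)
    _ ≤ √(ν.real C) * √B := by
        gcongr
        exact (setIntegral_mono_set hf2 (ae_of_all _ fun _ => sq_nonneg _)
          hCI.eventuallyLE).trans hB

end

theorem stmt1_general (a b he δ : ℝ) (hhe : 0 < he) (hab : b - a = he)
    (N C : Set ℝ) (hNm : MeasurableSet N) (hCm : MeasurableSet C)
    (hNI : N ⊆ Icc a b) (hCI : C ⊆ Icc a b) (hdisj : Disjoint N C)
    (hsum : (volume N).toReal + (volume C).toReal = he)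
    (hNpos : 0 < (volume N).toReal)
    (μ : ℝ → ℝ) (hμm : Measurable μ)
    (hμN : ∀ᵐ x ∂(volume.restrict N), μ x = 0)
    (hδ : 0 < δ)
    (hL1 : IntegrableOn (fun x => |μ x|) (Icc a b))
    (hsem : IntegrableOn
      (fun p : ℝ × ℝ => (μ p.1 - μ p.2) ^ 2 / |p.1 - p.2| ^ (1 + 2 * δ))
      (Icc a b ×ˢ Icc a b)) :
    (∫ x in Icc a b, |μ x|) ≤
      ((volume C).toReal ^ ((1 : ℝ) / 2) / (volume N).toReal ^ ((1 : ℝ) / 2)) *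
        he ^ ((1 : ℝ) / 2 + δ) *
        Real.sqrt (∫ ξ in Icc a b, ∫ η in Icc a b,
          (μ ξ - μ η) ^ 2 / |ξ - η| ^ (1 + 2 * δ)) := by
  simp only [← measureReal_def] at hsum hNpos ⊢
  set S := ∫ ξ in Icc a b, ∫ η in Icc a b, gagliardoKernel μ (1 + 2 * δ) ξ η
  change _ ≤ _ * √S
  have hs : 0 ≤ 1 + 2 * δ := by linarith
  have hdiam : ∀ ξ ∈ Icc a b, ∀ η ∈ Icc a b, |ξ - η| ≤ he := fun ξ hξ η hη => by
    rw [← Real.dist_eq, ← hab]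
    exact Real.dist_le_of_mem_Icc hξ hη
  have hIfin : volume (Icc a b) ≠ ⊤ := measure_Icc_lt_top.ne
  have hunion : (N ∪ C : Set ℝ) =ᵐ[volume] Icc a b :=
    union_ae_eq_of_measureReal_add_eq hNm hCm hNI hCI hdisj hIfin
      (by rw [Real.volume_real_Icc_of_le (by linarith), hab]; exact hsum)
  have hsq : IntegrableOn (fun ξ => μ ξ ^ 2) (Icc a b) :=
    integrableOn_sq_of_gagliardoKernel hs hdiam measurableSet_Icc hNm hNI hμN hsem
      hμm.aestronglyMeasurable hNpos
  have hL2 : ∫ ξ in Icc a b, μ ξ ^ 2 ≤ he ^ (1 + 2 * δ) * S / volume.real N := by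
    rw [le_div_iff₀ hNpos, mul_comm]
    exact measureReal_mul_integral_sq_le hs hdiam measurableSet_Icc hNm hNI hμN hsem
  have hpow : √(he ^ (1 + 2 * δ)) = he ^ ((1 : ℝ) / 2 + δ) := by
    rw [Real.sqrt_eq_rpow, ← Real.rpow_mul hhe.le]
    ring_nf
  calc ∫ x in Icc a b, |μ x| = ∫ x in C, |μ x| :=
        setIntegral_eq_of_union_ae_eq hunion hdisj hCm (hL1.mono_set (union_subset hNI hCI))
          (by filter_upwards [hμN] with x hx; rw [hx, abs_zero])
    _ ≤ √(volume.real C) * √(he ^ (1 + 2 * δ) * S / volume.real N) :=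
        setIntegral_abs_le_sqrt_measureReal_mul_sqrt hCI (measure_ne_top_of_subset hCI hIfin)
          hμm.aestronglyMeasurable hsq hL2
    _ = _ := by
        rw [Real.sqrt_div' _ hNpos.le, Real.sqrt_mul (Real.rpow_nonneg hhe.le _), hpow,
          ← Real.sqrt_eq_rpow, ← Real.sqrt_eq_rpow]
        ring

/-- L¹ estimate on an interval for a function vanishing on `N`, in terms of the
measures of `N`, `C` and the Gagliardo fractional seminorm of order `δ`. -/
theorem stmt1 (a b he δ : ℝ) (hhe : 0 < he) (hab : b - a = he)
    (N C : Set ℝ) (hNm : MeasurableSet N) (hCm : MeasurableSet C)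
    (hNI : N ⊆ Icc a b) (hCI : C ⊆ Icc a b) (hdisj : Disjoint N C)
    (hsum : (volume N).toReal + (volume C).toReal = he)
    (hNpos : 0 < (volume N).toReal) (hCpos : 0 < (volume C).toReal)
    (μ : ℝ → ℝ) (hμm : Measurable μ)
    (hμN : ∀ᵐ x ∂(volume.restrict N), μ x = 0)
    (hδ : 0 < δ) (hδ' : δ ≤ 1 / 2)
    (hL1 : IntegrableOn (fun x => |μ x|) (Icc a b))
    (hsem : IntegrableOn
      (fun p : ℝ × ℝ => (μ p.1 - μ p.2) ^ 2 / |p.1 - p.2| ^ (1 + 2 * δ))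
      (Icc a b ×ˢ Icc a b)) :
    (∫ x in Icc a b, |μ x|) ≤
      ((volume C).toReal ^ ((1 : ℝ) / 2) / (volume N).toReal ^ ((1 : ℝ) / 2)) *
        he ^ ((1 : ℝ) / 2 + δ) *
        Real.sqrt (∫ ξ in Icc a b, ∫ η in Icc a b,
          (μ ξ - μ η) ^ 2 / |ξ - η| ^ (1 + 2 * δ)) :=
  stmt1_general a b he δ hhe hab N C hNm hCm hNI hCI hdisj hsum hNpos μ hμm hμN hδ hL1 hsem
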